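/- Let n ≥ 1, let x₁, …, xₙ ∈ ℂ be pairwise distinct, and let y₁, …, yₙ ∈ ℂ. Let Q ∈ ℂ[T] be the Lagrange interpolation polynomial, i.e. the unique polynomial of degree < n with Q(x_i) = y_i for all i. Then the vanishing ideal I = {P ∈ ℂ[X,Y] : P(x_i, y_i) = 0 for all i} equals the ideal of ℂ[X,Y] generated by ∏_{i=1}^n (X − x_i) and Y − Q(X) (where Q(X) is the image of Q under T ↦ X), and dim_ℂ ℂ[X,Y]/I = n. -/

import Mathlib

open MvPolynomial

namespace Stmt10Aux

noncomputable def ψ (Q : Polynomial ℂ) : MvPolynomial (Fin 2) ℂ →ₐ[ℂ] Polynomial ℂ :=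
  MvPolynomial.aeval ![Polynomial.X, Q]

lemma psi_X0 (Q : Polynomial ℂ) : ψ Q (X 0) = Polynomial.X := by
  simp [ψ]

lemma psi_X1 (Q : Polynomial ℂ) : ψ Q (X 1) = Q := by
  simp [ψ]

lemma psi_aevalX0 (Q : Polynomial ℂ) (r : Polynomial ℂ) :
    ψ Q (Polynomial.aeval (X 0 : MvPolynomial (Fin 2) ℂ) r) = r := by
  rw [← Polynomial.aeval_algHom_apply, psi_X0, Polynomial.aeval_X_left_apply]

lemma sub_mem_span (Q : Polynomial ℂ) (P : MvPolynomial (Fin 2) ℂ) :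
    P - Polynomial.aeval (X 0 : MvPolynomial (Fin 2) ℂ) (ψ Q P) ∈
      Ideal.span {X 1 - Polynomial.aeval (X 0 : MvPolynomial (Fin 2) ℂ) Q} := by
  set g : MvPolynomial (Fin 2) ℂ := Polynomial.aeval (X 0 : MvPolynomial (Fin 2) ℂ) Q with hg
  set I : Ideal (MvPolynomial (Fin 2) ℂ) := Ideal.span {X 1 - g}
  have hmem : X 1 - g ∈ I := Ideal.subset_span rfl
  have key : (Ideal.Quotient.mkₐ ℂ I).comp
      ((Polynomial.aeval (X 0 : MvPolynomial (Fin 2) ℂ)).comp (ψ Q)) =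
      Ideal.Quotient.mkₐ ℂ I := by
    apply MvPolynomial.algHom_ext
    intro i
    fin_cases i
    · simp [ψ]
    · show Ideal.Quotient.mkₐ ℂ I (Polynomial.aeval (X 0 : MvPolynomial (Fin 2) ℂ) (ψ Q (X 1))) =
        Ideal.Quotient.mkₐ ℂ I (X 1)
      rw [psi_X1, ← hg]
      simp only [Ideal.Quotient.mkₐ_eq_mk]
      exact Ideal.Quotient.eq.2 (by rw [← neg_sub]; exact I.neg_mem hmem)
  have := congrArg (fun f => AlgHom.toRingHom f P) key
  simp only [AlgHom.toRingHom_eq_coe, AlgHom.coe_toRingHom, AlgHom.comp_apply] at this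
  have h2 : Ideal.Quotient.mk I (Polynomial.aeval (X 0 : MvPolynomial (Fin 2) ℂ) (ψ Q P)) =
      Ideal.Quotient.mk I P := by
    simpa using this
  exact Ideal.Quotient.eq.1 h2.symm

end Stmt10Aux

open Stmt10Aux

theorem stmt10 (n : ℕ) (hn : 1 ≤ n) (x y : Fin n → ℂ) (hx : Function.Injective x)
    (Q : Polynomial ℂ) (hQdeg : Q.degree < (n : ℕ)) (hQ : ∀ i, Q.eval (x i) = y i) :
    {P : MvPolynomial (Fin 2) ℂ | ∀ i, MvPolynomial.eval ![x i, y i] P = 0} =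
      ↑(Ideal.span {(∏ i, (X 0 - C (x i)) : MvPolynomial (Fin 2) ℂ),
          X 1 - Polynomial.aeval (X 0 : MvPolynomial (Fin 2) ℂ) Q}) ∧
    Module.finrank ℂ
      (MvPolynomial (Fin 2) ℂ ⧸
        Ideal.span {(∏ i, (X 0 - C (x i)) : MvPolynomial (Fin 2) ℂ),
          X 1 - Polynomial.aeval (X 0 : MvPolynomial (Fin 2) ℂ) Q}) = n := by
  classical
  set A := MvPolynomial (Fin 2) ℂ
  set g : A := Polynomial.aeval (X 0 : A) Q with hgdef
  set f : A := ∏ i, (X 0 - C (x i)) with hfdef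
  set p : Polynomial ℂ := ∏ i, (Polynomial.X - Polynomial.C (x i)) with hpdef
  set I : Ideal A := Ideal.span {f, X 1 - g} with hIdef
  -- basic facts about p
  have hpmonic : p.Monic := Polynomial.monic_prod_of_monic _ _ fun i _ => Polynomial.monic_X_sub_C _
  have hpne : p ≠ 0 := hpmonic.ne_zero
  have hpdeg : p.natDegree = n := by
    rw [hpdef, Polynomial.natDegree_prod _ _ fun i _ => Polynomial.X_sub_C_ne_zero _]
    simp
  -- ψ values
  have hψf : ψ Q f = p := by
    rw [hfdef, map_prod, hpdef]
    refine Finset.prod_congr rfl fun i _ => ?_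
    rw [map_sub, psi_X0]
    simp [ψ]
  have hψg : ψ Q g = Q := psi_aevalX0 Q Q
  have haevalp : Polynomial.aeval (X 0 : A) p = f := by
    rw [hpdef, map_prod, hfdef]
    refine Finset.prod_congr rfl fun i _ => ?_
    simp
  -- evaluation compatibility: aeval at points
  have hcomp : ∀ i, (Polynomial.aeval (x i) : Polynomial ℂ →ₐ[ℂ] ℂ).comp (ψ Q) =
      MvPolynomial.aeval ![x i, y i] := by
    intro i
    apply MvPolynomial.algHom_ext
    intro j
    fin_cases j
    · simp [ψ]
    · simp [ψ, hQ i]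
  have heval_eq : ∀ (P : A) (i : Fin n),
      Polynomial.eval (x i) (ψ Q P) = MvPolynomial.eval ![x i, y i] P := by
    intro P i
    have := congrArg (fun F => F P) (hcomp i)
    simpa [Polynomial.coe_aeval_eq_eval, MvPolynomial.coe_aeval_eq_eval] using this
  -- generators vanish at points
  have hgen_vanish : ∀ (P : A), P ∈ I → ∀ i, MvPolynomial.eval ![x i, y i] P = 0 := by
    intro P hP i
    have hker : I ≤ RingHom.ker (MvPolynomial.eval ![x i, y i]) := by
      rw [hIdef, Ideal.span_le]
      rintro z hz
      simp only [Set.mem_insert_iff, Set.mem_singleton_iff] at hz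
      rcases hz with rfl | rfl
      · show MvPolynomial.eval ![x i, y i] f = 0
        rw [← heval_eq, hψf, hpdef]
        rw [Polynomial.eval_prod]
        exact Finset.prod_eq_zero (Finset.mem_univ i) (by simp)
      · show MvPolynomial.eval ![x i, y i] (X 1 - g) = 0
        rw [← heval_eq, map_sub, psi_X1, hψg]
        simp [hQ i]
    exact hker hP
  -- membership: vanishing implies in I
  have hvanish_mem : ∀ (P : A), (∀ i, MvPolynomial.eval ![x i, y i] P = 0) → P ∈ I := by
    intro P hP
    have hdvd : p ∣ ψ Q P := by
      rw [hpdef]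
      refine Fintype.prod_dvd_of_coprime (Polynomial.pairwise_coprime_X_sub_C hx) fun i => ?_
      rw [Polynomial.dvd_iff_isRoot, Polynomial.IsRoot, heval_eq]
      exact hP i
    obtain ⟨h, hh⟩ := hdvd
    have h1 : P - Polynomial.aeval (X 0 : A) (ψ Q P) ∈ I := by
      have := sub_mem_span Q P
      refine Ideal.span_mono ?_ this
      intro z hz
      simp only [Set.mem_singleton_iff] at hz
      subst hz
      exact Set.mem_insert_of_mem _ rfl
    have h2 : Polynomial.aeval (X 0 : A) (ψ Q P) ∈ I := by
      rw [hh, map_mul, haevalp]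
      exact I.mul_mem_right _ (Ideal.subset_span (Set.mem_insert _ _))
    simpa using I.add_mem h1 h2
  constructor
  · ext P
    exact ⟨fun hP => hvanish_mem P hP, fun hP i => hgen_vanish P hP i⟩
  · -- finrank
    set Φ : A →ₐ[ℂ] AdjoinRoot p := ((Ideal.Quotient.mkₐ ℂ (Ideal.span {p})).comp (ψ Q))
    have hΦsurj : Function.Surjective Φ := by
      intro r
      obtain ⟨r, rfl⟩ := Ideal.Quotient.mk_surjective r
      refine ⟨Polynomial.aeval (X 0 : A) r, ?_⟩
      show Ideal.Quotient.mk (Ideal.span {p}) (ψ Q (Polynomial.aeval (X 0 : A) r)) =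
        Ideal.Quotient.mk (Ideal.span {p}) r
      rw [psi_aevalX0]
    have hker : RingHom.ker Φ = I := by
      apply le_antisymm
      · intro P hP
        rw [RingHom.mem_ker] at hP
        have hmk : Ideal.Quotient.mk (Ideal.span {p}) (ψ Q P) = 0 := hP
        have : ψ Q P ∈ Ideal.span {p} := by
          rwa [← Ideal.Quotient.eq_zero_iff_mem]
        obtain ⟨h, hh⟩ := Ideal.mem_span_singleton'.1 this
        have h1 : P - Polynomial.aeval (X 0 : A) (ψ Q P) ∈ I := by
          have := sub_mem_span Q P
          refine Ideal.span_mono ?_ this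
          intro z hz
          simp only [Set.mem_singleton_iff] at hz
          subst hz
          exact Set.mem_insert_of_mem _ rfl
        have h2 : Polynomial.aeval (X 0 : A) (ψ Q P) ∈ I := by
          rw [← hh, map_mul, haevalp]
          exact I.mul_mem_left _ (Ideal.subset_span (Set.mem_insert _ _))
        simpa using I.add_mem h1 h2
      · rw [hIdef, Ideal.span_le]
        rintro z hz
        simp only [Set.mem_insert_iff, Set.mem_singleton_iff] at hz
        rcases hz with rfl | rfl
        · show Φ f = 0
          have hr : Φ f = Ideal.Quotient.mk (Ideal.span {p}) (ψ Q f) := rfl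
          rw [hr, hψf]
          exact Ideal.Quotient.eq_zero_iff_mem.2 (Ideal.subset_span rfl)
        · show Φ (X 1 - g) = 0
          have hr : Φ (X 1 - g) = Ideal.Quotient.mk (Ideal.span {p}) (ψ Q (X 1 - g)) := rfl
          rw [hr, map_sub, psi_X1, hψg, sub_self, map_zero]
          rfl
    have e : (A ⧸ I) ≃ₐ[ℂ] AdjoinRoot p := by
      rw [← hker]
      exact Ideal.quotientKerAlgEquivOfSurjective hΦsurj
    have h1 : Module.finrank ℂ (A ⧸ I) = Module.finrank ℂ (AdjoinRoot p) :=
      e.toLinearEquiv.finrank_eq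
    show Module.finrank ℂ (A ⧸ I) = n
    rw [h1, (AdjoinRoot.powerBasis hpne).finrank, AdjoinRoot.powerBasis_dim, hpdeg]
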